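/- For every n ≥ 1, the sum over all permutations σ of {1,...,n} avoiding both 312 and 231 of L(σ) equals 2^{n-1}·(n+1)/2; in particular the expected longest increasing subsequence length on S_n(312,231) equals (n+1)/2. -/

import Mathlib

abbrev Avoids312 {n : ℕ} (σ : Equiv.Perm (Fin n)) : Prop :=
  ¬ ∃ i j k : Fin n, i < j ∧ j < k ∧ σ j < σ k ∧ σ k < σ i

abbrev Avoids21 {n : ℕ} (σ : Equiv.Perm (Fin n)) : Prop :=
  ¬ ∃ i j : Fin n, i < j ∧ σ j < σ i

abbrev Avoids123 {n : ℕ} (σ : Equiv.Perm (Fin n)) : Prop :=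
  ¬ ∃ i j k : Fin n, i < j ∧ j < k ∧ σ i < σ j ∧ σ j < σ k

abbrev Avoids132 {n : ℕ} (σ : Equiv.Perm (Fin n)) : Prop :=
  ¬ ∃ i j k : Fin n, i < j ∧ j < k ∧ σ i < σ k ∧ σ k < σ j

abbrev Avoids213 {n : ℕ} (σ : Equiv.Perm (Fin n)) : Prop :=
  ¬ ∃ i j k : Fin n, i < j ∧ j < k ∧ σ j < σ i ∧ σ i < σ k

abbrev Avoids231 {n : ℕ} (σ : Equiv.Perm (Fin n)) : Prop :=
  ¬ ∃ i j k : Fin n, i < j ∧ j < k ∧ σ k < σ i ∧ σ i < σ j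

abbrev Avoids321 {n : ℕ} (σ : Equiv.Perm (Fin n)) : Prop :=
  ¬ ∃ i j k : Fin n, i < j ∧ j < k ∧ σ k < σ j ∧ σ j < σ i

abbrev Avoids1234 {n : ℕ} (σ : Equiv.Perm (Fin n)) : Prop :=
  ¬ ∃ i j k l : Fin n, i < j ∧ j < k ∧ k < l ∧ σ i < σ j ∧ σ j < σ k ∧ σ k < σ l

abbrev Avoids1243 {n : ℕ} (σ : Equiv.Perm (Fin n)) : Prop :=
  ¬ ∃ i j k l : Fin n, i < j ∧ j < k ∧ k < l ∧ σ i < σ j ∧ σ j < σ l ∧ σ l < σ k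

abbrev AvoidsIncr {n : ℕ} (m : ℕ) (σ : Equiv.Perm (Fin n)) : Prop :=
  ¬ ∃ f : Fin m → Fin n,
      (∀ i j : Fin m, i < j → f i < f j) ∧ (∀ i j : Fin m, i < j → σ (f i) < σ (f j))

/-- Length of the longest increasing subsequence of a permutation of `{1,…,n}`. -/
def lis {n : ℕ} (σ : Equiv.Perm (Fin n)) : ℕ :=
  Nat.findGreatest (fun k => ∃ f : Fin k → Fin n,
    (∀ i j : Fin k, i < j → f i < f j) ∧ (∀ i j : Fin k, i < j → σ (f i) < σ (f j))) n

/-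
Permutations avoiding 312 and 231 are the layered ones: the positions split into consecutive
blocks, `σ` reverses each block, and the blocks follow each other in increasing order. Such a `σ`
is determined by its descent set `D`, since its inversions are exactly the pairs in a common block;
conversely every `D ⊆ {0, …, n - 2}` cuts out a layered permutation. An increasing subsequence
meets each block at most once and the block ends form one, so `L(σ) = n - |D|`, and summing
`n - |S|` over the subsets `S` of an `(n - 1)`-set gives `2 ^ (n - 1) * (n + 1) / 2`.
-/

open Finset Equiv

def runEnd (D : Finset ℕ) (i : ℕ) : ℕ :=
  Nat.find (p := fun j => i ≤ j ∧ j ∉ D) <| by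
    obtain ⟨j, hj⟩ := Infinite.exists_notMem_finset (D ∪ range i)
    exact ⟨j, by simp_all [not_or]⟩

section runEnd

variable {D : Finset ℕ} {i j k : ℕ}

lemma le_runEnd : i ≤ runEnd D i := (Nat.find_spec (p := fun j => i ≤ j ∧ j ∉ D) _).1

lemma runEnd_notMem : runEnd D i ∉ D := (Nat.find_spec (p := fun j => i ≤ j ∧ j ∉ D) _).2

lemma runEnd_le (hij : i ≤ j) (hj : j ∉ D) : runEnd D i ≤ j :=
  Nat.find_min' (p := fun j => i ≤ j ∧ j ∉ D) _ ⟨hij, hj⟩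

lemma mem_of_lt_runEnd (hik : i ≤ k) (hk : k < runEnd D i) : k ∈ D := by
  by_contra h
  exact (runEnd_le hik h).not_gt hk

lemma lt_runEnd_iff : i < runEnd D i ↔ i ∈ D :=
  ⟨mem_of_lt_runEnd le_rfl, fun hi => le_runEnd.lt_of_ne fun h => runEnd_notMem (h ▸ hi)⟩

lemma runEnd_mono : Monotone (runEnd D) := fun _ _ hij =>
  runEnd_le (hij.trans le_runEnd) runEnd_notMem

lemma runEnd_eq_of_le_runEnd (hij : i ≤ j) (hj : j ≤ runEnd D i) : runEnd D j = runEnd D i :=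
  (runEnd_le hj runEnd_notMem).antisymm (runEnd_mono hij)

lemma runEnd_lt {n : ℕ} (hD : D ⊆ range (n - 1)) (hi : i < n) : runEnd D i < n := by
  have : runEnd D i ≤ n - 1 := runEnd_le (by omega) fun h => by simpa using hD h
  omega

end runEnd

namespace Equiv.Perm

variable {n : ℕ}

lemma eq_of_forall_lt_iff {σ τ : Perm (Fin n)}
    (h : ∀ ⦃i j⦄, i < j → (σ j < σ i ↔ τ j < τ i)) : σ = τ := by
  have hmono : Monotone (σ * τ⁻¹) := by
    intro a b hab
    obtain ⟨a, rfl⟩ := τ.surjective a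
    obtain ⟨b, rfl⟩ := τ.surjective b
    simp only [coe_mul, Function.comp_apply, inv_def, symm_apply_apply] at hab ⊢
    rcases lt_trichotomy a b with hlt | rfl | hgt
    · exact not_lt.1 fun h' => hab.not_gt ((h hlt).1 h')
    · exact le_rfl
    · exact ((h hgt).2 (hab.lt_of_ne (τ.injective.ne hgt.ne'))).le
  rwa [monotone_iff, mul_inv_eq_one] at hmono

def descents (σ : Perm (Fin n)) : Finset ℕ :=
  (range (n - 1)).filter fun i => ∃ h : i + 1 < n, σ ⟨i + 1, h⟩ < σ ⟨i, by omega⟩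

variable {σ : Perm (Fin n)}

lemma mem_descents {i : ℕ} :
    i ∈ σ.descents ↔ ∃ h : i + 1 < n, σ ⟨i + 1, h⟩ < σ ⟨i, by omega⟩ := by
  simp only [descents, mem_filter, mem_range, and_iff_right_iff_imp]
  exact fun ⟨h, _⟩ => by omega

lemma descents_subset : σ.descents ⊆ range (n - 1) := filter_subset _ _

lemma lt_of_forall_mem_descents {i j : Fin n} (hij : i < j)
    (h : ∀ k : ℕ, i ≤ k → k < j → k ∈ σ.descents) : σ j < σ i := by
  obtain ⟨j, hj⟩ := j
  induction j with
  | zero => simp [Fin.lt_def] at hij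
  | succ j ih =>
    replace hij : (i : ℕ) < j + 1 := hij
    obtain ⟨_, hdesc⟩ := mem_descents.1 (h j (by omega) (by simp))
    rcases (show (i : ℕ) ≤ j by omega).eq_or_lt with heq | hlt
    · simpa [← heq] using hdesc
    · refine hdesc.trans (ih (by omega) (Fin.lt_def.2 hlt) fun k hik hkj => h k hik ?_)
      simp only at hkj ⊢
      omega

end Equiv.Perm

open Equiv.Perm

section Layered

variable {n : ℕ} {D : Finset ℕ} {σ : Perm (Fin n)}

-- The blocks are the maximal intervals `[a, b]` with `[a, b) ⊆ D`; `σ` reverses each block and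
-- keeps the blocks in increasing order, i.e. `i < j` is an inversion iff `j` is in `i`'s block.
def IsLayered (D : Finset ℕ) (σ : Perm (Fin n)) : Prop :=
  ∀ ⦃i j : Fin n⦄, i < j → (σ j < σ i ↔ (j : ℕ) ≤ runEnd D i)

def layerKey (D : Finset ℕ) (i : Fin n) : ℕ ×ₗ ℕᵒᵈ :=
  toLex (runEnd D i, OrderDual.toDual (i : ℕ))

lemma layerKey_injective : Function.Injective (layerKey (n := n) D) := fun i j h => by
  simpa [layerKey, Fin.val_inj] using congrArg (fun p => (ofLex p).2) h

lemma layerKey_lt_layerKey_iff {i j : Fin n} (hij : i < j) :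
    layerKey D j < layerKey D i ↔ (j : ℕ) ≤ runEnd D i := by
  have hmono : runEnd D i ≤ runEnd D j := runEnd_mono hij.le
  simp only [layerKey, Prod.Lex.toLex_lt_toLex, OrderDual.toDual_lt_toDual, Fin.val_fin_lt]
  constructor
  · rintro (h | ⟨h, -⟩)
    · exact absurd h hmono.not_gt
    · exact h ▸ le_runEnd
  · exact fun h => Or.inr ⟨runEnd_eq_of_le_runEnd hij.le h, hij⟩

-- Ranks the positions by block, and decreasingly inside a block.
def layered (n : ℕ) (D : Finset ℕ) : Perm (Fin n) :=
  (Tuple.sort (layerKey D)).symm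

lemma layered_lt_layered_iff {i j : Fin n} :
    layered n D i < layered n D j ↔ layerKey D i < layerKey D j := by
  have hsort : StrictMono (layerKey D ∘ Tuple.sort (layerKey (n := n) D)) :=
    (Tuple.monotone_sort _).strictMono_of_injective
      (layerKey_injective.comp (Tuple.sort _).injective)
  simpa [layered] using (hsort.lt_iff_lt (a := layered n D i) (b := layered n D j)).symm

lemma isLayered_layered : IsLayered D (layered n D) := fun _ _ hij => by
  rw [layered_lt_layered_iff, layerKey_lt_layerKey_iff hij]

lemma IsLayered.eq_layered (h : IsLayered D σ) : σ = layered n D :=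
  eq_of_forall_lt_iff fun _ _ hij => by rw [h hij, isLayered_layered hij]

lemma Avoids312.apply_lt_of_ascent (h312 : Avoids312 σ) {i j k : Fin n} (hij : i ≤ j)
    (hjk : (k : ℕ) = j + 1) (hasc : σ j < σ k) : σ i < σ k := by
  rcases hij.eq_or_lt with rfl | hij
  · exact hasc
  · refine lt_of_le_of_ne (not_lt.1 fun hki => h312 ⟨i, j, k, hij, ?_, hasc, hki⟩)
      (σ.injective.ne (by rintro rfl; rw [Fin.lt_def] at hij; omega))
    rw [Fin.lt_def]; omega

theorem isLayered_descents (h312 : Avoids312 σ) (h231 : Avoids231 σ) :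
    IsLayered σ.descents σ := by
  intro i j hij
  constructor
  · -- past the run of descents from `i`, the ascent ending it completes a 312 or a 231
    intro hji
    by_contra! hend
    set e := runEnd σ.descents i
    have hie : (i : ℕ) ≤ e := le_runEnd
    let E : Fin n := ⟨e, by omega⟩
    let E' : Fin n := ⟨e + 1, by omega⟩
    have hasc : σ E < σ E' := by
      refine lt_of_le_of_ne (not_lt.1 fun hdesc => runEnd_notMem (mem_descents.2 ⟨?_, hdesc⟩))
        (σ.injective.ne (by simp [E, E', Fin.ext_iff]))
      omega
    have hiE' : σ i < σ E' := h312.apply_lt_of_ascent (j := E) (Fin.le_def.2 hie) rfl hasc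
    rcases (show (E' : ℕ) ≤ j by simp [E']; omega).eq_or_lt with hE' | hE'
    · exact hiE'.asymm (by rwa [Fin.ext hE'])
    · exact h231 ⟨i, E', j, Fin.lt_def.2 (by simp [E']; omega), hE', hji, hiE'⟩
  · exact fun hj => lt_of_forall_mem_descents hij fun k hik hkj => mem_of_lt_runEnd hik (by omega)

namespace IsLayered

variable (h : IsLayered D σ)
include h

lemma avoids312 : Avoids312 σ := by
  rintro ⟨i, j, k, hij, hjk, hjk', hki⟩
  have hk : (k : ℕ) ≤ runEnd D i := (h (hij.trans hjk)).1 hki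
  have hj : runEnd D j = runEnd D i := runEnd_eq_of_le_runEnd (Fin.le_def.1 hij.le)
    ((Fin.le_def.1 hjk.le).trans hk)
  exact hjk'.asymm ((h hjk).2 (hj ▸ hk))

lemma avoids231 : Avoids231 σ := by
  rintro ⟨i, j, k, hij, hjk, hki, hij'⟩
  have hk : (k : ℕ) ≤ runEnd D i := (h (hij.trans hjk)).1 hki
  exact hij'.asymm ((h hij).2 ((Fin.le_def.1 hjk.le).trans hk))

lemma descents_eq (hD : D ⊆ range (n - 1)) : σ.descents = D := by
  ext i
  rw [mem_descents]
  constructor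
  · rintro ⟨hi, hdesc⟩
    exact lt_runEnd_iff.1
      ((h (i := ⟨i, by omega⟩) (j := ⟨i + 1, hi⟩) (by simp [Fin.lt_def])).1 hdesc)
  · intro hi
    have hi' : i + 1 < n := by have := mem_range.1 (hD hi); omega
    exact ⟨hi', (h (Fin.lt_def.2 (by simp))).2 (lt_runEnd_iff.2 hi)⟩

end IsLayered

lemma exists_strictMono_lis (σ : Perm (Fin n)) :
    ∃ f : Fin (lis σ) → Fin n, StrictMono f ∧ StrictMono (σ ∘ f) :=
  Nat.findGreatest_spec (P := fun k => ∃ f : Fin k → Fin n, StrictMono f ∧ StrictMono (σ ∘ f))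
    (Nat.zero_le n) ⟨Fin.elim0, fun a => a.elim0, fun a => a.elim0⟩

lemma le_lis {m : ℕ} {f : Fin m → Fin n} (hf : StrictMono f) (hσf : StrictMono (σ ∘ f)) :
    m ≤ lis σ :=
  Nat.le_findGreatest (P := fun k => ∃ f : Fin k → Fin n, StrictMono f ∧ StrictMono (σ ∘ f))
    (by simpa using Fintype.card_le_of_injective f hf.injective) ⟨f, hf, hσf⟩

lemma IsLayered.lis_add_card (h : IsLayered D σ) (hD : D ⊆ range (n - 1)) :
    lis σ + #D = n := by
  set E := range n \ D
  have hE : #E + #D = n := by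
    rw [card_sdiff_add_card_eq_card (hD.trans (range_subset_range.2 (Nat.sub_le n 1))), card_range]
  suffices lis σ = #E by omega
  apply le_antisymm
  · obtain ⟨f, hf, hσf⟩ := exists_strictMono_lis σ
    have hmono : StrictMono fun a => runEnd D (f a) := fun a b hab =>
      (not_le.1 fun hle => (hσf hab).asymm ((h (hf hab)).2 hle)).trans_le le_runEnd
    simpa using card_le_card_of_injOn (s := univ) (t := E) _
      (fun a _ => by simpa [E] using ⟨runEnd_lt hD (f a).isLt, runEnd_notMem⟩)
      hmono.injective.injOn
  · set g := E.orderEmbOfFin rfl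
    have hg : ∀ a, g a < n ∧ g a ∉ D := fun a => by
      simpa only [E, mem_sdiff, mem_range] using E.orderEmbOfFin_mem rfl a
    refine le_lis (f := fun a => ⟨g a, (hg a).1⟩) (fun a b hab => g.strictMono hab)
      fun a b hab => ?_
    have hend : runEnd D (g a) = g a := (runEnd_le le_rfl (hg a).2).antisymm le_runEnd
    refine lt_of_le_of_ne (not_lt.1 fun hba => ?_) (σ.injective.ne (by simpa using hab.ne))
    have := (h (Fin.lt_def.2 (g.strictMono hab))).1 hba
    exact (g.strictMono hab).not_ge (by simpa [hend] using this)

end Layered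

lemma Finset.sum_card_powerset_mul_two {α : Type*} (s : Finset α) :
    (∑ t ∈ s.powerset, #t) * 2 = #s * 2 ^ #s := by
  rw [sum_powerset_apply_card (fun k => k)]
  simp only [smul_eq_mul, mul_comm ((#s).choose _), Nat.sum_range_mul_choose]
  rcases #s with _ | k
  · simp
  · rw [Nat.add_sub_cancel, pow_succ]; ring

lemma sum_powerset_range_sub_card (m : ℕ) :
    ∑ S ∈ (range m).powerset, ((m : ℚ) + 1 - #S) = 2 ^ m * ((m : ℚ) + 2) / 2 := by
  have hcard := congrArg (Nat.cast (R := ℚ)) (range m).sum_card_powerset_mul_two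
  rw [card_range] at hcard
  push_cast at hcard
  rw [sum_sub_distrib, sum_const, card_powerset, card_range, nsmul_eq_mul]
  push_cast
  linear_combination (-1 / 2 : ℚ) * hcard

/-- the sum of `L(σ)` over `S_n(312,231)` equals `2^(n-1)·(n+1)/2`. -/
theorem stmt_9 (n : ℕ) (hn : 1 ≤ n) :
    ∑ σ ∈ Finset.univ.filter (fun σ : Equiv.Perm (Fin n) => Avoids312 σ ∧ Avoids231 σ),
        (lis σ : ℚ)
      = 2 ^ (n - 1) * ((n : ℚ) + 1) / 2 := by
  set A := univ.filter fun σ : Perm (Fin n) => Avoids312 σ ∧ Avoids231 σ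
  have hA : ∀ σ ∈ A, IsLayered σ.descents σ := fun σ hσ =>
    isLayered_descents (mem_filter.1 hσ).2.1 (mem_filter.1 hσ).2.2
  have hsum : ∑ σ ∈ A, (lis σ : ℚ) = ∑ S ∈ (range (n - 1)).powerset, ((n : ℚ) - #S) :=
    sum_nbij' descents (layered n) (fun _ _ => mem_powerset.2 descents_subset)
      (fun _ _ => mem_filter.2
        ⟨mem_univ _, isLayered_layered.avoids312, isLayered_layered.avoids231⟩)
      (fun σ hσ => (hA σ hσ).eq_layered.symm)
      (fun _ hS => isLayered_layered.descents_eq (mem_powerset.1 hS))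
      (fun σ hσ =>
        eq_sub_of_add_eq (by exact_mod_cast (hA σ hσ).lis_add_card descents_subset))
  obtain ⟨m, rfl⟩ := Nat.exists_eq_add_of_le' hn
  rw [hsum]
  push_cast
  simpa [add_assoc, one_add_one_eq_two] using sum_powerset_range_sub_card m
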